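/- arXiv:math/0612656 — 4 statements merged into one kernel-verified Lean document; each statement's English description precedes it below -/
import Mathlib

section
/- Let n ≥ 2 and let i, j ∈ {1,...,n} be distinct indices. The monomial blowing-up φ_{ij} : ℝ^n → ℝ^n, sending a = (a_1,...,a_n) to the vector whose j-th coordinate is a_i + a_j and whose other coordinates equal those of a, is strictly monotone with respect to the lexicographic order on ℝ^n (i.e. a <_lex b implies φ_{ij}(a) <_lex φ_{ij}(b)) if and only if i < j. -/
noncomputable section

/-- The monomial blowing-up `φ_{ij}` of `ℝ^n` (for distinct `i`, `j`): the `j`-th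
coordinate becomes `a i + a j`, the other coordinates are unchanged. -/
def blowUp (n : ℕ) (i j : Fin n) : (Fin n → ℝ) → (Fin n → ℝ) :=
  fun a l => if l = j then a i + a j else a l

/-- The monomial blowing-down `φ_{ij}⁻¹` of `ℝ^n`, the inverse of `blowUp n i j`. -/
def blowDown (n : ℕ) (i j : Fin n) : (Fin n → ℝ) → (Fin n → ℝ) :=
  fun a l => if l = j then a l - a i else a l

/-- `Φ` is a finite composition of order-preserving monomial blowing-ups `φ_{ij}`, `i < j`. -/
def IsBlowUpComp (n : ℕ) (Φ : (Fin n → ℝ) → (Fin n → ℝ)) : Prop :=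
  ∃ L : List ((Fin n → ℝ) → (Fin n → ℝ)),
    (∀ g ∈ L, ∃ i j : Fin n, i < j ∧ g = blowUp n i j) ∧ Φ = L.foldr (· ∘ ·) id

/-- `Φ` is a finite composition of order-preserving monomial blowing-downs `φ_{ij}⁻¹`, `i < j`. -/
def IsBlowDownComp (n : ℕ) (Φ : (Fin n → ℝ) → (Fin n → ℝ)) : Prop :=
  ∃ L : List ((Fin n → ℝ) → (Fin n → ℝ)),
    (∀ g ∈ L, ∃ i j : Fin n, i < j ∧ g = blowDown n i j) ∧ Φ = L.foldr (· ∘ ·) id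

/-! When `i < j` and `k` is the first index at which `a` and `b` differ, their images under
`blowUp n i j` still first differ at `k`, in the same direction: coordinate `j` only gains
`a i = b i` when `j ≤ k`. When `j < i`, the vector `e_j - 2 e_i` is lexicographically
positive but is sent to a vector whose first nonzero coordinate, the `j`-th, is `-1`. -/

section BlowUp

variable {n : ℕ} {i j : Fin n}

@[simp]
theorem blowUp_apply_self (a : Fin n → ℝ) : blowUp n i j a j = a i + a j := if_pos rfl

theorem blowUp_apply_of_ne {l : Fin n} (hl : l ≠ j) (a : Fin n → ℝ) : blowUp n i j a l = a l :=
  if_neg hl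

@[simp]
theorem blowUp_zero : blowUp n i j 0 = 0 := by
  ext l
  simp [blowUp]

theorem blowUp_lt_blowUp_of_lt (hij : i < j) {a b : Fin n → ℝ} (hab : toLex a < toLex b) :
    toLex (blowUp n i j a) < toLex (blowUp n i j b) := by
  obtain ⟨k, hagree, hlt⟩ := hab
  replace hagree : ∀ l < k, a l = b l := hagree
  have hi : j ≤ k → a i = b i := fun hjk => hagree i (hij.trans_le hjk)
  refine ⟨k, fun l hlk => ?_, ?_⟩
  · rcases eq_or_ne l j with rfl | hlj
    · simp [hi hlk.le, hagree l hlk]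
    · simp [blowUp_apply_of_ne hlj, hagree l hlk]
  · rcases eq_or_ne k j with rfl | hkj
    · simpa [hi le_rfl] using hlt
    · simpa [blowUp_apply_of_ne hkj] using hlt

theorem exists_toLex_pos_toLex_blowUp_neg (hji : j < i) :
    ∃ b : Fin n → ℝ, toLex 0 < toLex b ∧ toLex (blowUp n i j b) < toLex 0 := by
  have hij : i ≠ j := hji.ne'
  refine ⟨Pi.single j 1 - Pi.single i 2, ⟨j, fun l hlj => ?_, ?_⟩, ⟨j, fun l hlj => ?_, ?_⟩⟩
  · simp [hlj.ne, (hlj.trans hji).ne]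
  · simp [hij.symm]
  · simp [blowUp_apply_of_ne hlj.ne, hlj.ne, (hlj.trans hji).ne]
  · norm_num [hij]

end BlowUp

theorem blowUp_strictMono_lex_iff_general (n : ℕ) (i j : Fin n) (hij : i ≠ j) :
    (∀ a b : Fin n → ℝ, toLex a < toLex b →
        toLex (blowUp n i j a) < toLex (blowUp n i j b)) ↔ i < j := by
  refine ⟨fun hmono => hij.lt_or_gt.resolve_right fun hji => ?_,
    fun hlt _ _ => blowUp_lt_blowUp_of_lt hlt⟩
  obtain ⟨b, hpos, hneg⟩ := exists_toLex_pos_toLex_blowUp_neg hji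
  have himage := hmono 0 b hpos
  rw [blowUp_zero] at himage
  exact lt_asymm himage hneg

/-- **(Notations 3(2); cf. [SV2, Proposition 5]).**  For distinct indices `i, j`, the
monomial blowing-up `φ_{ij} : ℝ^n → ℝ^n` is strictly monotone for the lexicographic
order on `ℝ^n` if and only if `i < j`. -/
theorem blowUp_strictMono_lex_iff (n : ℕ) (hn : 2 ≤ n) (i j : Fin n) (hij : i ≠ j) :
    (∀ a b : Fin n → ℝ, toLex a < toLex b →
        toLex (blowUp n i j a) < toLex (blowUp n i j b)) ↔ i < j :=
  blowUp_strictMono_lex_iff_general n i j hij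
end
end

section
/- Let n ≥ 2 and let Λ be a non-empty subset of ℤ_{≥0}^n. Then there exist a finite composition Φ of order-preserving monomial blowing-ups of ℝ^n and a vector a ∈ Φ(Λ) with integer coordinates such that Φ(Λ) ⊆ a + ℤ_{≥0}^n. -/
/-! The points of `Λ` lie in `ℕⁿ`; let `g` be the lexicographically least one and `K ≥ max gₗ`.
For `i = 0, 1, …, n - 1` in turn, add `K` times the `i`-th coordinate to every later one; this is a
composition of `K`-fold blowing-ups `φ_{ij}`, `i < j`, and it is linear. If `w ∈ Λ` first differs
from `g` at `i`, then `d = w - g` vanishes before `i`, `dᵢ ≥ 1` and `d ≥ -K`: the shears before `i`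
fix `d`, the `i`-th one makes it nonnegative, and the later ones keep it so. Hence the image of `g`
lies below the image of every point of `Λ`, and all images are in `ℕⁿ`. -/

noncomputable section

theorem isBlowUpComp_id (n : ℕ) : IsBlowUpComp n id := ⟨[], by simp, rfl⟩

namespace IsBlowUpComp

variable {n : ℕ} {Φ Ψ : (Fin n → ℝ) → (Fin n → ℝ)}

theorem blowUp_comp {i j : Fin n} (hij : i < j) (hΦ : IsBlowUpComp n Φ) :
    IsBlowUpComp n (blowUp n i j ∘ Φ) := by
  obtain ⟨L, hL, rfl⟩ := hΦ
  refine ⟨blowUp n i j :: L, ?_, rfl⟩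
  simpa using ⟨⟨i, j, hij, rfl⟩, hL⟩

@[elab_as_elim]
theorem induction {motive : ∀ Φ, IsBlowUpComp n Φ → Prop}
    (id : motive id (isBlowUpComp_id n))
    (blowUp_comp : ∀ i j Φ (hij : i < j) (hΦ : IsBlowUpComp n Φ),
      motive Φ hΦ → motive (blowUp n i j ∘ Φ) (hΦ.blowUp_comp hij))
    {Φ} (hΦ : IsBlowUpComp n Φ) : motive Φ hΦ := by
  obtain ⟨L, hL, rfl⟩ := hΦ
  induction L with
  | nil => exact id
  | cons g L ih =>
    obtain ⟨i, j, hij, rfl⟩ := hL g List.mem_cons_self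
    exact blowUp_comp i j _ hij _ (ih fun g hg => hL g (List.mem_cons_of_mem _ hg))

theorem _root_.isBlowUpComp_blowUp {i j : Fin n} (hij : i < j) : IsBlowUpComp n (blowUp n i j) :=
  (isBlowUpComp_id n).blowUp_comp hij

theorem comp (hΦ : IsBlowUpComp n Φ) (hΨ : IsBlowUpComp n Ψ) : IsBlowUpComp n (Φ ∘ Ψ) := by
  induction hΦ using induction with
  | id => exact hΨ
  | blowUp_comp i j Φ hij _ ih => exact ih.blowUp_comp hij

theorem map_add (hΦ : IsBlowUpComp n Φ) (x y : Fin n → ℝ) : Φ (x + y) = Φ x + Φ y := by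
  induction hΦ using induction with
  | id => rfl
  | blowUp_comp i j Φ _ _ ih =>
    ext l
    simp only [Function.comp_apply, ih, blowUp, Pi.add_apply]
    split_ifs <;> ring

theorem map_nonneg (hΦ : IsBlowUpComp n Φ) {x : Fin n → ℝ} (hx : 0 ≤ x) : 0 ≤ Φ x := by
  induction hΦ using induction with
  | id => exact hx
  | blowUp_comp i j Φ _ _ ih =>
    intro l
    simp only [Function.comp_apply, blowUp, Pi.zero_apply]
    split_ifs
    · exact add_nonneg (ih i) (ih j)
    · exact ih l

theorem iterate (hΦ : IsBlowUpComp n Φ) (K : ℕ) : IsBlowUpComp n Φ^[K] := by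
  induction K with
  | zero => exact isBlowUpComp_id n
  | succ K ih => exact ih.comp hΦ

theorem exists_natCast_eq (hΦ : IsBlowUpComp n Φ) (w : Fin n → ℕ) :
    ∃ w' : Fin n → ℕ, Φ (Nat.cast ∘ w) = Nat.cast ∘ w' := by
  induction hΦ using induction with
  | id => exact ⟨w, rfl⟩
  | blowUp_comp i j Φ _ _ ih =>
    obtain ⟨w', hw'⟩ := ih
    refine ⟨Function.update w' j (w' i + w' j), ?_⟩
    ext l
    simp only [Function.comp_apply, hw', blowUp, Function.update_apply]
    split_ifs <;> push_cast <;> rfl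

end IsBlowUpComp

section Sweep

variable {n : ℕ}

theorem blowUp_iterate {i j : Fin n} (hij : i ≠ j) (K : ℕ) (x : Fin n → ℝ) :
    (blowUp n i j)^[K] x = fun l => if l = j then x l + K * x i else x l := by
  induction K with
  | zero => ext l; split_ifs <;> simp
  | succ K ih =>
    ext l
    rw [Function.iterate_succ_apply', ih]
    simp only [blowUp, if_neg hij]
    split_ifs with hl
    · subst hl; push_cast; ring
    · rfl

def shear (i : Fin n) (K : ℕ) (x : Fin n → ℝ) : Fin n → ℝ :=
  fun l => if i < l then x l + K * x i else x l

theorem exists_isBlowUpComp_add_mul_of_mem (i : Fin n) (K : ℕ) {J : List (Fin n)}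
    (hJ : J.Nodup) (hiJ : ∀ j ∈ J, i < j) :
    ∃ Φ, IsBlowUpComp n Φ ∧ ∀ x l, Φ x l = if l ∈ J then x l + K * x i else x l := by
  induction J with
  | nil => exact ⟨id, isBlowUpComp_id n, by simp⟩
  | cons j J ih =>
    obtain ⟨hjJ, hJ⟩ := List.nodup_cons.1 hJ
    obtain ⟨Φ, hΦ, hΦJ⟩ := ih hJ fun k hk => hiJ k (List.mem_cons_of_mem _ hk)
    have hij : i < j := hiJ j List.mem_cons_self
    refine ⟨(blowUp n i j)^[K] ∘ Φ, ((isBlowUpComp_blowUp hij).iterate K).comp hΦ, fun x l => ?_⟩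
    have hiJ' : i ∉ J := fun h => (hiJ i (.tail _ h)).false
    simp only [Function.comp_apply, blowUp_iterate hij.ne, hΦJ, hiJ', if_false, List.mem_cons]
    by_cases hl : l = j
    · simp [hl, hjJ]
    · simp [hl]

theorem isBlowUpComp_shear (i : Fin n) (K : ℕ) : IsBlowUpComp n (shear i K) := by
  obtain ⟨Φ, hΦ, hΦJ⟩ := exists_isBlowUpComp_add_mul_of_mem i K
    ((List.nodup_finRange n).filter (i < ·)) (by simp)
  convert hΦ using 1
  ext x l
  simp [hΦJ, shear]

theorem shear_eq_self {i : Fin n} {x : Fin n → ℝ} (hx : x i = 0) (K : ℕ) : shear i K x = x := by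
  ext l
  simp [shear, hx]

theorem shear_nonneg {i : Fin n} {K : ℕ} {d : Fin n → ℝ} (hlt : ∀ l < i, d l = 0)
    (hi : 1 ≤ d i) (hK : ∀ l, -(K : ℝ) ≤ d l) : 0 ≤ shear i K d := by
  intro l
  simp only [shear, Pi.zero_apply]
  rcases lt_trichotomy l i with hl | rfl | hl
  · simp [hl.not_gt, hlt l hl]
  · simp only [lt_irrefl, if_false]; linarith
  · rw [if_pos hl]; nlinarith [hK l, (Nat.cast_nonneg K : (0 : ℝ) ≤ K)]

def sweep (K : ℕ) : List (Fin n) → (Fin n → ℝ) → (Fin n → ℝ)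
  | [] => id
  | i :: is => sweep K is ∘ shear i K

theorem isBlowUpComp_sweep (K : ℕ) : ∀ is : List (Fin n), IsBlowUpComp n (sweep K is)
  | [] => isBlowUpComp_id n
  | i :: is => (isBlowUpComp_sweep K is).comp (isBlowUpComp_shear i K)

theorem sweep_nonneg {K : ℕ} {is : List (Fin n)} (his : is.Pairwise (· < ·)) {i : Fin n}
    (hi : i ∈ is) {d : Fin n → ℝ} (hlt : ∀ l < i, d l = 0) (hi1 : 1 ≤ d i)
    (hK : ∀ l, -(K : ℝ) ≤ d l) : 0 ≤ sweep K is d := by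
  induction is with
  | nil => simp at hi
  | cons k is ih =>
    obtain ⟨hkis, his⟩ := List.pairwise_cons.1 his
    simp only [sweep, Function.comp_apply]
    rcases List.mem_cons.1 hi with rfl | hi
    · exact (isBlowUpComp_sweep K is).map_nonneg (shear_nonneg hlt hi1 hK)
    · rw [shear_eq_self (hlt k (hkis i hi))]
      exact ih his hi

theorem sweep_le_sweep_of_toLex_le {K : ℕ} {v w : Fin n → ℕ} (hv : ∀ l, v l ≤ K)
    (hvw : toLex v ≤ toLex w) :
    sweep K (List.finRange n) (Nat.cast ∘ v) ≤ sweep K (List.finRange n) (Nat.cast ∘ w) := by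
  rcases hvw.eq_or_lt with hvw | hvw
  · rw [toLex_inj.1 hvw]
  obtain ⟨i, hlt, hi⟩ : ∃ i, (∀ l < i, v l = w l) ∧ v i < w i := hvw
  have hsplit : (Nat.cast ∘ w : Fin n → ℝ) = Nat.cast ∘ v + (Nat.cast ∘ w - Nat.cast ∘ v) := by
    abel
  rw [hsplit, (isBlowUpComp_sweep K _).map_add]
  refine le_add_of_nonneg_right (sweep_nonneg (List.sortedLT_finRange n).pairwise
    (List.mem_finRange i) (fun l hl => ?_) ?_ fun l => ?_) <;>
    simp only [Pi.sub_apply, Function.comp_apply]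
  · simp [hlt l hl]
  · have : ((v i + 1 : ℕ) : ℝ) ≤ w i := by exact_mod_cast hi
    push_cast at this
    linarith
  · have : (v l : ℝ) ≤ K := by exact_mod_cast hv l
    linarith [(w l).cast_nonneg (α := ℝ)]

end Sweep

theorem exists_blowUpComp_translate_general (n : ℕ)
    (Λ : Set (Fin n → ℝ)) (hne : Λ.Nonempty)
    (hΛ : ∀ v ∈ Λ, ∀ l : Fin n, ∃ a : ℕ, v l = (a : ℝ)) :
    ∃ Φ : (Fin n → ℝ) → (Fin n → ℝ), IsBlowUpComp n Φ ∧
      ∃ a ∈ Φ '' Λ, (∀ l : Fin n, ∃ z : ℤ, a l = (z : ℝ)) ∧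
        ∀ b ∈ Φ '' Λ, ∀ l : Fin n, ∃ c : ℕ, b l = a l + (c : ℝ) := by
  set S : Set (Fin n → ℕ) := {w | Nat.cast ∘ w ∈ Λ}
  have hΛS : ∀ v ∈ Λ, ∃ w ∈ S, Nat.cast ∘ w = v := fun v hv => by
    choose w hw using hΛ v hv
    obtain rfl : Nat.cast ∘ w = v := funext fun l => (hw l).symm
    exact ⟨w, hv, rfl⟩
  obtain ⟨w₀, hw₀S, -⟩ := hΛS _ hne.some_mem
  obtain ⟨_, ⟨g, hgS, rfl⟩, hgmin⟩ :=
    wellFounded_lt.has_min (toLex '' S) ⟨toLex w₀, w₀, hw₀S, rfl⟩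
  obtain ⟨K, hK⟩ : ∃ K, ∀ l, g l ≤ K :=
    ⟨∑ l, g l, fun l => Finset.single_le_sum (by simp) (Finset.mem_univ l)⟩
  have hsweep := isBlowUpComp_sweep K (List.finRange n)
  obtain ⟨g', hg'⟩ := hsweep.exists_natCast_eq g
  refine ⟨sweep K (List.finRange n), hsweep, _, ⟨_, hgS, rfl⟩, fun l => ⟨g' l, by simp [hg']⟩, ?_⟩
  rintro _ ⟨v, hv, rfl⟩ l
  obtain ⟨w, hwS, rfl⟩ := hΛS v hv
  have hle := sweep_le_sweep_of_toLex_le hK (not_lt.1 (hgmin _ ⟨w, hwS, rfl⟩)) l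
  obtain ⟨w', hw'⟩ := hsweep.exists_natCast_eq w
  simp only [hg', hw', Function.comp_apply, Nat.cast_le] at hle ⊢
  exact ⟨w' l - g' l, by simp [Nat.cast_sub hle]⟩

/-- **(Lemma 15 of [SV2], here Lemma `1208052`).**  Let `n ≥ 2` and let `Λ` be a non-empty
subset of `ℤ_{≥0}^n`.  Then there exist a finite composition `Φ` of order-preserving
monomial blowing-ups of `ℝ^n` and a vector `a ∈ Φ(Λ)` with integer coordinates such that
`Φ(Λ) ⊆ a + ℤ_{≥0}^n`. -/
theorem exists_blowUpComp_translate (n : ℕ) (hn : 2 ≤ n)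
    (Λ : Set (Fin n → ℝ)) (hne : Λ.Nonempty)
    (hΛ : ∀ v ∈ Λ, ∀ l : Fin n, ∃ a : ℕ, v l = (a : ℝ)) :
    ∃ Φ : (Fin n → ℝ) → (Fin n → ℝ), IsBlowUpComp n Φ ∧
      ∃ a ∈ Φ '' Λ, (∀ l : Fin n, ∃ z : ℤ, a l = (z : ℝ)) ∧
        ∀ b ∈ Φ '' Λ, ∀ l : Fin n, ∃ c : ℕ, b l = a l + (c : ℝ) :=
  exists_blowUpComp_translate_general n Λ hne hΛ
end
end

section
/- Let n ≥ 2 and let Φ be a finite composition of order-preserving monomial blowing-downs of ℝ^n. Then: (a) every non-zero element of Φ(ℝ_{≥0}^n) is lexicographically greater than 0 (its first non-zero component is positive); and (b) ℝ_{≥0}^n ⊆ Φ(ℝ_{≥0}^n). -/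
noncomputable section

/-! A non-zero vector of the closed positive orthant is lexicographically positive. A single
blowing-down `φ_{ij}⁻¹` with `i < j` only changes the `j`-th coordinate, by subtracting an earlier
one; so it fixes the first non-zero coordinate of a vector and everything before it, and thus
preserves lexicographic positivity. A blowing-up maps the closed positive orthant into itself and
is inverted by the corresponding blowing-down. Both facts pass to compositions by induction. -/

section

variable {n : ℕ}

theorem IsBlowDownComp.induction {P : ((Fin n → ℝ) → (Fin n → ℝ)) → Prop} (h_id : P id)
    (h_comp : ∀ i j Φ, i < j → P Φ → P (blowDown n i j ∘ Φ)) {Φ : (Fin n → ℝ) → (Fin n → ℝ)}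
    (hΦ : IsBlowDownComp n Φ) : P Φ := by
  obtain ⟨L, hL, rfl⟩ := hΦ
  induction L with
  | nil => exact h_id
  | cons g L ih =>
    obtain ⟨i, j, hij, rfl⟩ := hL g List.mem_cons_self
    exact h_comp i j _ hij (ih fun f hf => hL f (List.mem_cons_of_mem _ hf))

theorem blowDown_zero (i j : Fin n) : blowDown n i j 0 = 0 := by
  funext l
  simp [blowDown]

theorem blowDown_blowUp {i j : Fin n} (hij : i ≠ j) (w : Fin n → ℝ) :
    blowDown n i j (blowUp n i j w) = w := by
  funext l
  by_cases hl : l = j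
  · subst hl
    simp [blowDown, blowUp, hij]
  · simp [blowDown, blowUp, hl]

theorem blowUp_nonneg (i j : Fin n) {w : Fin n → ℝ} (hw : 0 ≤ w) : 0 ≤ blowUp n i j w := by
  intro l
  simp only [blowUp]
  split_ifs
  exacts [add_nonneg (hw i) (hw j), hw l]

theorem blowDown_apply_of_le {i j k l : Fin n} (hij : i < j) {x : Fin n → ℝ}
    (hx : ∀ m < k, x m = 0) (hl : l ≤ k) : blowDown n i j x l = x l := by
  simp only [blowDown]
  split_ifs with hlj
  · subst hlj
    rw [hx i (hij.trans_le hl), sub_zero]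
  · rfl

theorem toLex_pos_iff (x : Fin n → ℝ) :
    toLex 0 < toLex x ↔ ∃ k, (∀ m < k, x m = 0) ∧ 0 < x k :=
  exists_congr fun _ => and_congr_left' <| forall₂_congr fun _ _ => eq_comm

theorem blowDown_toLex_pos {i j : Fin n} (hij : i < j) {x : Fin n → ℝ}
    (hx : toLex 0 < toLex x) : toLex 0 < toLex (blowDown n i j x) := by
  obtain ⟨k, hbefore, hk⟩ := (toLex_pos_iff x).1 hx
  refine (toLex_pos_iff _).2 ⟨k, fun m hm => ?_, ?_⟩
  · rw [blowDown_apply_of_le hij hbefore hm.le, hbefore m hm]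
  · rwa [blowDown_apply_of_le hij hbefore le_rfl]

namespace IsBlowDownComp

variable {Φ : (Fin n → ℝ) → (Fin n → ℝ)}

theorem map_zero (hΦ : IsBlowDownComp n Φ) : Φ 0 = 0 :=
  hΦ.induction (P := fun Φ => Φ 0 = 0) rfl fun _ _ _ _ h => by
    rw [Function.comp_apply, h, blowDown_zero]

theorem toLex_pos (hΦ : IsBlowDownComp n Φ) {x : Fin n → ℝ} (hx : toLex 0 < toLex x) :
    toLex 0 < toLex (Φ x) :=
  hΦ.induction (P := fun Φ => toLex 0 < toLex (Φ x)) hx fun _ _ _ hij h =>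
    blowDown_toLex_pos hij h

theorem exists_nonneg_preimage (hΦ : IsBlowDownComp n Φ) {w : Fin n → ℝ} (hw : 0 ≤ w) :
    ∃ v, 0 ≤ v ∧ Φ v = w := by
  refine hΦ.induction (P := fun Φ => ∀ w, 0 ≤ w → ∃ v, 0 ≤ v ∧ Φ v = w)
    (fun w hw => ⟨w, hw, rfl⟩) (fun i j _ hij ih w hw => ?_) w hw
  obtain ⟨v, hv, hΦv⟩ := ih _ (blowUp_nonneg i j hw)
  exact ⟨v, hv, by rw [Function.comp_apply, hΦv, blowDown_blowUp hij.ne]⟩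

end IsBlowDownComp

end

theorem blowDownComp_image_first_quadrant_general (n : ℕ)
    (Φ : (Fin n → ℝ) → (Fin n → ℝ)) (hΦ : IsBlowDownComp n Φ) :
    (∀ v : Fin n → ℝ, (∀ l, 0 ≤ v l) → Φ v ≠ 0 →
        toLex (0 : Fin n → ℝ) < toLex (Φ v)) ∧
    (∀ w : Fin n → ℝ, (∀ l, 0 ≤ w l) → ∃ v : Fin n → ℝ, (∀ l, 0 ≤ v l) ∧ Φ v = w) := by
  refine ⟨fun v hv hΦv => hΦ.toLex_pos ?_, fun w hw => hΦ.exists_nonneg_preimage hw⟩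
  have hv0 : v ≠ 0 := by
    rintro rfl
    exact hΦv hΦ.map_zero
  exact Pi.toLex_strictMono (lt_of_le_of_ne hv (Ne.symm hv0))

/-- **(Lemma `0812061`).**  Let `n ≥ 2` and `Φ` a finite composition of order-preserving
monomial blowing-downs of `ℝ^n`.  Then (a) every non-zero element of `Φ(ℝ_{≥0}^n)` is
lexicographically greater than `0`, and (b) `ℝ_{≥0}^n ⊆ Φ(ℝ_{≥0}^n)`. -/
theorem blowDownComp_image_first_quadrant (n : ℕ) (hn : 2 ≤ n)
    (Φ : (Fin n → ℝ) → (Fin n → ℝ)) (hΦ : IsBlowDownComp n Φ) :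
    (∀ v : Fin n → ℝ, (∀ l, 0 ≤ v l) → Φ v ≠ 0 →
        toLex (0 : Fin n → ℝ) < toLex (Φ v)) ∧
    (∀ w : Fin n → ℝ, (∀ l, 0 ≤ w l) → ∃ v : Fin n → ℝ, (∀ l, 0 ≤ v l) ∧ Φ v = w) :=
  blowDownComp_image_first_quadrant_general n Φ hΦ
end
end

section
/- Let n ≥ 2 and let A be an n×n integer matrix with all diagonal entries equal to 1 and all entries below the diagonal equal to 0 (a unipotent upper-triangular integer matrix). Then A is a finite product of elementary matrices E_{ij}(1) with i < j if and only if all entries of A are non-negative. -/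
/-!
Left multiplication by `E_{ij}(1)` adds row `j` to row `i`. If `A ≠ 1` is unipotent upper
triangular with non-negative entries, let `i` be the last row that differs from the identity and
pick `j > i` with `A i j > 0`. Row `j` of `A` is then that of the identity, so with the matrix
unit `e_{ij}` we get `A = E_{ij}(1) * (A - e_{ij})`, and `A - e_{ij}` is again unipotent, upper
triangular and non-negative, with smaller entry sum. Conversely, products of matrices with
non-negative entries have non-negative entries.
-/

open Matrix

namespace Matrix

variable {ι R : Type*} [Fintype ι]

section DecidableEq

variable [DecidableEq ι]

theorem single_mul_of_row_eq_one [NonAssocSemiring R] {A : Matrix ι ι R} {j : ι}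
    (hA : A j = (1 : Matrix ι ι R) j) (i : ι) (c : R) : single i j c * A = single i j c := by
  ext r k
  by_cases hr : r = i
  · subst hr
    simp [hA, one_apply, single_apply]
  · simp [hr, single_apply_of_row_ne (Ne.symm hr)]

theorem transvection_mul_sub_single [CommRing R] {A : Matrix ι ι R} {i j : ι} (hij : i ≠ j)
    (hA : A j = (1 : Matrix ι ι R) j) :
    transvection i j 1 * (A - single i j 1) = A := by
  rw [transvection, add_mul, one_mul, mul_sub, single_mul_of_row_eq_one hA,
    single_mul_single_of_ne _ _ _ _ hij.symm, sub_zero, sub_add_cancel]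

theorem sum_entries_sub_single [AddCommGroup R] (A : Matrix ι ι R) (i j : ι) (c : R) :
    ∑ r, ∑ k, (A - single i j c) r k = ∑ r, ∑ k, A r k - c := by
  simp [Finset.sum_sub_distrib, single_apply, ite_and]

end DecidableEq

section LinearOrder

variable [LinearOrder ι]

theorem IsUpperTriangular.exists_lt_ne_zero_of_ne_one [Zero R] [One R] {A : Matrix ι ι R}
    (hdiag : ∀ i, A i i = 1) (hupper : A.IsUpperTriangular) (hA : A ≠ 1) :
    ∃ i j, i < j ∧ A i j ≠ 0 ∧ ∀ r, i < r → A r = (1 : Matrix ι ι R) r := by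
  classical
  set rows := Finset.univ.filter fun r => A r ≠ (1 : Matrix ι ι R) r
  have hrows : rows.Nonempty := by
    by_contra! h
    exact hA (funext fun r => by simpa [rows] using Finset.eq_empty_iff_forall_notMem.mp h r)
  obtain ⟨i, hi, hi_max⟩ := rows.exists_max_image id hrows
  obtain ⟨j, hj⟩ : ∃ j, A i j ≠ (1 : Matrix ι ι R) i j := by
    simpa [rows, funext_iff] using hi
  have hij : i < j := by
    refine lt_of_not_ge fun hji => hj ?_
    rcases hji.lt_or_eq with hji | rfl
    · rw [show A i j = 0 from hupper hji, one_apply_ne hji.ne']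
    · rw [hdiag, one_apply_eq]
  refine ⟨i, j, hij, by rwa [one_apply_ne hij.ne] at hj, fun r hr => ?_⟩
  by_contra h
  exact (hi_max r (by simpa [rows] using h)).not_gt hr

variable (ι R) in
def upperElementary [CommRing R] : Set (Matrix ι ι R) :=
  {B | ∃ i j, i < j ∧ B = transvection i j 1}

theorem closure_upperElementary_le_nonneg [CommRing R] [PartialOrder R] [IsOrderedRing R] :
    Submonoid.closure (upperElementary ι R) ≤ (Subsemiring.nonneg R).matrix.toSubmonoid := by
  refine Submonoid.closure_le.mpr ?_
  rintro _ ⟨i, j, -, rfl⟩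
  change transvection i j 1 ∈ (Subsemiring.nonneg R).matrix
  refine add_mem (one_mem _) fun r k => show (0 : R) ≤ single i j 1 r k from ?_
  rw [single_apply]
  split_ifs <;> simp

theorem mem_closure_upperElementary_of_nonneg {A : Matrix ι ι ℤ} (hdiag : ∀ i, A i i = 1)
    (hupper : A.IsUpperTriangular) (hnonneg : ∀ i j, 0 ≤ A i j) :
    A ∈ Submonoid.closure (upperElementary ι ℤ) := by
  by_cases hA : A = 1
  · exact hA ▸ one_mem _
  obtain ⟨i, j, hij, hAij, hrows⟩ := hupper.exists_lt_ne_zero_of_ne_one hdiag hA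
  have hpos : 0 < A i j := (hnonneg i j).lt_of_ne' hAij
  have hsum_pos : 0 < ∑ r, ∑ k, A r k :=
    Finset.sum_pos' (fun r _ => Finset.sum_nonneg fun k _ => hnonneg r k) ⟨i, Finset.mem_univ _,
      Finset.sum_pos' (fun k _ => hnonneg i k) ⟨j, Finset.mem_univ _, hpos⟩⟩
  have hsum := sum_entries_sub_single A i j 1
  rw [← transvection_mul_sub_single hij.ne (hrows j hij)]
  refine mul_mem (Submonoid.subset_closure ⟨i, j, hij, rfl⟩)
    (mem_closure_upperElementary_of_nonneg (fun r => ?_)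
      (hupper.sub (blockTriangular_single hij.le 1)) fun r k => ?_)
  · have hr : ¬(i = r ∧ j = r) := fun h => hij.ne (h.1.trans h.2.symm)
    simp [hdiag, hr]
  · rw [sub_apply, single_apply]
    split_ifs with h
    · obtain ⟨rfl, rfl⟩ := h
      omega
    · simpa using hnonneg r k
termination_by (∑ r, ∑ k, A r k).toNat
decreasing_by omega

end LinearOrder

end Matrix

theorem unipotent_prod_elementary_iff_nonneg_entries_general
    (n : ℕ) (A : Matrix (Fin n) (Fin n) ℤ)
    (hdiag : ∀ i, A i i = 1) (hlow : ∀ i j : Fin n, j < i → A i j = 0) :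
    (∃ L : List (Matrix (Fin n) (Fin n) ℤ),
        (∀ B ∈ L, ∃ i j : Fin n, i < j ∧ B = 1 + Matrix.single i j 1) ∧
        A = L.prod) ↔
      (∀ i j, 0 ≤ A i j) := by
  constructor
  · rintro ⟨L, hL, rfl⟩
    exact closure_upperElementary_le_nonneg
      (Submonoid.list_prod_mem _ fun B hB => Submonoid.subset_closure (hL B hB))
  · intro hnonneg
    obtain ⟨L, hL, hprod⟩ := Submonoid.exists_list_of_mem_closure
      (mem_closure_upperElementary_of_nonneg hdiag (fun i j => hlow i j) hnonneg)
    exact ⟨L, hL, hprod.symm⟩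

/-- **(Remark `0812062`).**  Let `n ≥ 2` and let `A` be a unipotent upper-triangular
`n × n` integer matrix (all diagonal entries `1`, all entries below the diagonal `0`).
Then `A` is a finite product of elementary matrices `E_{ij}(1)` with `i < j` (the matrices
of the order-preserving monomial blowing-ups) if and only if all entries of `A` are
non-negative. -/
theorem unipotent_prod_elementary_iff_nonneg_entries
    (n : ℕ) (hn : 2 ≤ n) (A : Matrix (Fin n) (Fin n) ℤ)
    (hdiag : ∀ i, A i i = 1) (hlow : ∀ i j : Fin n, j < i → A i j = 0) :
    (∃ L : List (Matrix (Fin n) (Fin n) ℤ),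
        (∀ B ∈ L, ∃ i j : Fin n, i < j ∧ B = 1 + Matrix.single i j 1) ∧
        A = L.prod) ↔
      (∀ i j, 0 ≤ A i j) :=
  unipotent_prod_elementary_iff_nonneg_entries_general n A hdiag hlow
end
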